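/- Let A ⋊^σ G be a skew groupoid ring with G a groupoid with finitely many objects, all A_e equal to a fixed integral domain, and each isotropy group G_e abelian. Then A is maximal commutative in A ⋊^σ G if and only if every nonzero twosided ideal of A ⋊^σ G has nonzero intersection with A. -/

import Mathlib

open CategoryTheory

/-- The type of morphisms of a category `G`, bundled with domain and codomain. -/
abbrev CMor (G : Type*) [Category G] := Σ e f : G, e ⟶ f

/-- Transport along an equality of objects, as a ring homomorphism. -/
def castRH {G : Type*} (A : G → Type*) [∀ e, Ring (A e)]
    {e f : G} (h : e = f) : A e →+* A f := by subst h; exact RingHom.id _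

/-- The carrier of the category crossed product `A ⋊_α^σ G`: finitely supported
formal sums `Σ_s a_s u_s` with `a_s ∈ A_{c(s)}`. -/
abbrev CP {G : Type*} [Category G] (A : G → Type*) [∀ e, Ring (A e)] :=
  Π₀ p : CMor G, A p.2.1

open Classical in
/-- The multiplication of the category crossed product:
`(a u_s)(b u_t) = a σ_s(b) α(s,t) u_{st}` when `d(s) = c(t)`, else `0`. -/
noncomputable def catMul {G : Type*} [Category G] {A : G → Type*} [∀ e, Ring (A e)]
    (σ : ∀ e f : G, (e ⟶ f) → (A e →+* A f))
    (α : ∀ e f g : G, (f ⟶ g) → (e ⟶ f) → A g)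
    (x y : CP A) : CP A :=
  x.sum fun p a => y.sum fun q b =>
    if h : q.2.1 = p.1 then
      DFinsupp.single (⟨q.1, p.2.1, (q.2.2 ≫ eqToHom h) ≫ p.2.2⟩ : CMor G)
        (a * σ p.1 p.2.1 p.2.2 (castRH A h b) * α q.1 p.1 p.2.1 p.2.2 (q.2.2 ≫ eqToHom h))
    else 0

open Classical in
/-- `a u_s`, the formal sum supported on a single morphism. -/
noncomputable def catSingle {G : Type*} [Category G] {A : G → Type*} [∀ e, Ring (A e)]
    (p : CMor G) (a : A p.2.1) : CP A := DFinsupp.single p a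

/-- `I` is a twosided ideal of the category crossed product `A ⋊_α^σ G`. -/
def IsCrossedIdeal {G : Type*} [Category G] {A : G → Type*} [∀ e, Ring (A e)]
    (σ : ∀ e f : G, (e ⟶ f) → (A e →+* A f))
    (α : ∀ e f g : G, (f ⟶ g) → (e ⟶ f) → A g)
    (I : Set (CP A)) : Prop :=
  (0 : CP A) ∈ I ∧ (∀ x y, x ∈ I → y ∈ I → x + y ∈ I) ∧ (∀ x, x ∈ I → -x ∈ I) ∧
    ∀ x r, x ∈ I → catMul σ α r x ∈ I ∧ catMul σ α x r ∈ I

/-!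
If `A` is maximal commutative and `I` is a nonzero ideal, pick `x ∈ I` of minimal support and
`s : f ⟶ e` in its support. Then `y = x u_{s⁻¹} ∈ I` has nonzero coefficient at `1_e` and no larger
support; each commutator `y (a u_g) - (a u_g) y ∈ I` kills that coefficient (`D` is commutative),
so it vanishes by minimality. Hence `y` commutes with `A`, i.e. `y ∈ A`.

Conversely, an element commuting with `A` that has a nonzero coefficient at some `s ≠ 1` forces
`s : e ⟶ e` and `σ_s = id` (`D` is a domain). Then the kernel of the pushforward along
`σ : G → RingEndCat G D` is an ideal containing `u_{1_e} - u_s ≠ 0` but meeting `A` only in `0`.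
-/

open scoped Classical

lemma DFinsupp.exists_ne_zero_forall_card_support_lt {ι : Type*} [DecidableEq ι] {β : ι → Type*}
    [∀ i, Zero (β i)] [∀ i (b : β i), Decidable (b ≠ 0)] {S : Set (Π₀ i, β i)}
    (h : ∃ y ∈ S, y ≠ 0) :
    ∃ x ∈ S, x ≠ 0 ∧ ∀ z ∈ S, z.support.card < x.support.card → z = 0 := by
  obtain ⟨y, hyS, hy0⟩ := h
  obtain ⟨x, ⟨hxS, hx0⟩, hmin⟩ :=
    (measure fun z : Π₀ i, β i => z.support.card).wf.has_min {z | z ∈ S ∧ z ≠ 0} ⟨y, hyS, hy0⟩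
  exact ⟨x, hxS, hx0, fun z hzS hlt => by_contra fun hz0 => hmin z ⟨hzS, hz0⟩ hlt⟩

lemma DFinsupp.card_support_sum_le {ι κ : Type*} [DecidableEq ι] [DecidableEq κ] {β : ι → Type*}
    {γ : κ → Type*} [∀ i, Zero (β i)] [∀ i (b : β i), Decidable (b ≠ 0)] [∀ k, AddCommMonoid (γ k)]
    [∀ k (c : γ k), Decidable (c ≠ 0)] (x : Π₀ i, β i) (g : ∀ i, β i → Π₀ k, γ k)
    (hg : ∀ i b, (g i b).support.card ≤ 1) : (x.sum g).support.card ≤ x.support.card :=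
  calc (x.sum g).support.card
      ≤ (x.support.biUnion fun i => (g i (x i)).support).card := Finset.card_le_card support_sum
    _ ≤ ∑ i ∈ x.support, (g i (x i)).support.card := Finset.card_biUnion_le
    _ ≤ ∑ _i ∈ x.support, 1 := Finset.sum_le_sum fun i _ => hg i (x i)
    _ = x.support.card := by simp

section CatMul

variable {C : Type*} [Category C] {A : C → Type*} [∀ e, Ring (A e)]
  (σ : ∀ e f : C, (e ⟶ f) → (A e →+* A f)) (α : ∀ e f g : C, (f ⟶ g) → (e ⟶ f) → A g)

@[simp]
lemma catMul_zero_left (y : CP A) : catMul σ α 0 y = 0 := rfl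

@[simp]
lemma catMul_zero_right (x : CP A) : catMul σ α x 0 = 0 :=
  DFinsupp.sum_eq_zero fun _ => rfl

lemma catMul_add_left (x x' y : CP A) :
    catMul σ α (x + x') y = catMul σ α x y + catMul σ α x' y := by
  unfold catMul
  refine DFinsupp.sum_add_index (fun p => ?_) (fun p a a' => ?_)
  · exact DFinsupp.sum_eq_zero fun q => by split <;> simp
  · rw [← DFinsupp.sum_add]
    refine Finset.sum_congr rfl fun q _ => ?_
    dsimp only
    split <;> simp [add_mul]

lemma catMul_add_right (x y y' : CP A) :
    catMul σ α x (y + y') = catMul σ α x y + catMul σ α x y' := by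
  unfold catMul
  rw [← DFinsupp.sum_add]
  refine Finset.sum_congr rfl fun p _ => ?_
  refine DFinsupp.sum_add_index (fun q => ?_) (fun q b b' => ?_)
  · split <;> simp
  · split <;> simp [mul_add, add_mul]

lemma catMul_single_single (p q : CMor C) (a : A p.2.1) (b : A q.2.1) :
    catMul σ α (DFinsupp.single p a) (DFinsupp.single q b) =
      if h : q.2.1 = p.1 then
        DFinsupp.single (⟨q.1, p.2.1, (q.2.2 ≫ eqToHom h) ≫ p.2.2⟩ : CMor C)
          (a * σ p.1 p.2.1 p.2.2 (castRH A h b) * α q.1 p.1 p.2.1 p.2.2 (q.2.2 ≫ eqToHom h))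
      else 0 := by
  unfold catMul
  rw [DFinsupp.sum_single_index, DFinsupp.sum_single_index]
  · split <;> simp
  · exact DFinsupp.sum_eq_zero fun q => by split <;> simp

lemma catMul_eq_sum_single_mul (x y : CP A) :
    catMul σ α x y = x.sum fun p a => catMul σ α (DFinsupp.single p a) y := by
  unfold catMul
  refine Finset.sum_congr rfl fun p _ => ?_
  dsimp only
  rw [DFinsupp.sum_single_index]
  exact DFinsupp.sum_eq_zero fun q => by split <;> simp

lemma card_support_catMul_single_le (x : CP A) (q : CMor C) (b : A q.2.1) :
    (catMul σ α x (DFinsupp.single q b)).support.card ≤ x.support.card := by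
  rw [catMul_eq_sum_single_mul]
  refine DFinsupp.card_support_sum_le _ _ fun p a => ?_
  rw [catMul_single_single]
  split
  · exact (Finset.card_le_card DFinsupp.support_single_subset).trans (Finset.card_singleton _).le
  · simp

end CatMul

-- the product of the skew groupoid ring `A ⋊^σ G`, i.e. trivial twisting `α = 1`
local notation:70 x:70 " ⋆[" σ "] " y:71 => catMul (A := fun _ => _) σ (fun _ _ _ _ _ => 1) x y

@[simp]
lemma castRH_const_apply {C D : Type*} [Ring D] {e f : C} (h : e = f) (b : D) :
    castRH (fun _ : C => D) h b = b := by
  subst h; rfl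

def SupportedOnIdentities {C : Type*} [Category C] {A : C → Type*} [∀ e, Ring (A e)] (x : CP A) :
    Prop :=
  ∀ p : CMor C, (∀ e, p ≠ ⟨e, e, 𝟙 e⟩) → x p = 0

section ConstantCoefficients

variable {C : Type*} [Category C] {D : Type*} [Ring D] (σ : ∀ e f : C, (e ⟶ f) → (D →+* D))

lemma catMul_single_single_comp {e f g : C} (s : e ⟶ f) (t : f ⟶ g) (a b : D) :
    DFinsupp.single ⟨f, g, t⟩ a ⋆[σ] DFinsupp.single ⟨e, f, s⟩ b =
      DFinsupp.single ⟨e, g, s ≫ t⟩ (a * σ f g t b) := by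
  simp [catMul_single_single]

lemma catMul_single_single_of_ne {e f f' g : C} (s : e ⟶ f') (t : f ⟶ g) (a b : D) (h : f' ≠ f) :
    DFinsupp.single ⟨f, g, t⟩ a ⋆[σ] DFinsupp.single ⟨e, f', s⟩ b = 0 := by
  simp [catMul_single_single, h]

def CommutesWithCoeffs (x : CP (fun _ : C => D)) : Prop :=
  ∀ (e : C) (a : D),
    x ⋆[σ] DFinsupp.single ⟨e, e, 𝟙 e⟩ a = DFinsupp.single ⟨e, e, 𝟙 e⟩ a ⋆[σ] x

end ConstantCoefficients

/-- The codomain of `σ` viewed as a functor out of `G`: the objects of `G`, with every hom-set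
`D →+* D`. -/
structure RingEndCat (G D : Type*) where
  obj : G

instance {G D : Type*} [Ring D] : Category (RingEndCat G D) where
  Hom _ _ := D →+* D
  id _ := RingHom.id D
  comp s t := t.comp s

section SkewGroupoidRing

variable {G : Type*} [Groupoid G] {D : Type*} [CommRing D] (σ : ∀ e f : G, (e ⟶ f) → (D →+* D))

lemma catMul_single_apply (x : CP (fun _ : G => D)) {e f h : G} (s : e ⟶ f) (b : D) (t : e ⟶ h) :
    (x ⋆[σ] DFinsupp.single ⟨e, f, s⟩ b) ⟨e, h, t⟩ = x ⟨f, h, inv s ≫ t⟩ * σ f h (inv s ≫ t) b := by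
  induction x using DFinsupp.induction with
  | h0 => simp
  | ha p a x _ _ ih =>
    rw [catMul_add_left, DFinsupp.add_apply, ih, DFinsupp.add_apply, add_mul]
    congr 1
    obtain ⟨p₁, p₂, r⟩ := p
    by_cases hf : f = p₁
    · subst hf
      rw [catMul_single_single_comp]
      by_cases hp : (⟨e, p₂, s ≫ r⟩ : CMor G) = ⟨e, h, t⟩
      · obtain ⟨⟩ := hp
        simp
      · have hp' : (⟨f, p₂, r⟩ : CMor G) ≠ ⟨f, h, inv s ≫ t⟩ := by
          rintro ⟨⟩
          simp at hp
        rw [DFinsupp.single_eq_of_ne (Ne.symm hp), DFinsupp.single_eq_of_ne (Ne.symm hp'), zero_mul]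
    · have hp : (⟨p₁, p₂, r⟩ : CMor G) ≠ ⟨f, h, inv s ≫ t⟩ := fun hp =>
        hf (congrArg Sigma.fst hp).symm
      rw [catMul_single_single_of_ne σ _ _ _ _ hf, DFinsupp.single_eq_of_ne (Ne.symm hp), zero_mul]
      rfl

lemma catMul_single_apply_of_ne (x : CP (fun _ : G => D)) {e f g h : G} (s : e ⟶ f) (b : D)
    (t : g ⟶ h) (hg : g ≠ e) : (x ⋆[σ] DFinsupp.single ⟨e, f, s⟩ b) ⟨g, h, t⟩ = 0 := by
  induction x using DFinsupp.induction with
  | h0 => simp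
  | ha p a x _ _ ih =>
    rw [catMul_add_left, DFinsupp.add_apply, ih, add_zero]
    obtain ⟨p₁, p₂, r⟩ := p
    by_cases hf : f = p₁
    · subst hf
      rw [catMul_single_single_comp]
      exact DFinsupp.single_eq_of_ne fun hp => hg (congrArg Sigma.fst hp)
    · rw [catMul_single_single_of_ne σ _ _ _ _ hf]
      rfl

lemma catMul_single_id_apply (x : CP (fun _ : G => D)) (e : G) (a : D) (r : CMor G) :
    (x ⋆[σ] DFinsupp.single ⟨e, e, 𝟙 e⟩ a) r =
      if r.1 = e then x r * σ r.1 r.2.1 r.2.2 a else 0 := by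
  obtain ⟨g, h, t⟩ := r
  by_cases hg : g = e
  · subst hg
    simp [catMul_single_apply]
  · simp [catMul_single_apply_of_ne σ x _ a t hg, hg]

lemma single_id_catMul_apply (hσ1 : ∀ e : G, σ e e (𝟙 e) = RingHom.id D)
    (x : CP (fun _ : G => D)) (e : G) (a : D) (r : CMor G) :
    (DFinsupp.single ⟨e, e, 𝟙 e⟩ a ⋆[σ] x) r = if r.2.1 = e then a * x r else 0 := by
  induction x using DFinsupp.induction with
  | h0 => simp
  | ha p b x _ _ ih =>
    rw [catMul_add_right, DFinsupp.add_apply, ih, DFinsupp.add_apply, mul_add, ite_add_zero]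
    congr 1
    obtain ⟨p₁, p₂, t⟩ := p
    by_cases hp : p₂ = e
    · subst hp
      rw [catMul_single_single_comp, Category.comp_id, hσ1, RingHom.id_apply]
      by_cases hr : (⟨p₁, p₂, t⟩ : CMor G) = r
      · subst hr
        simp
      · simp [DFinsupp.single_eq_of_ne (Ne.symm hr)]
    · rw [catMul_single_single_of_ne σ _ _ _ _ hp]
      split_ifs with hr
      · rw [DFinsupp.single_eq_of_ne fun h => hp (by rw [← hr, h]), mul_zero]
        rfl
      · rfl

lemma support_commutator_subset (hσ1 : ∀ e : G, σ e e (𝟙 e) = RingHom.id D)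
    (y : CP (fun _ : G => D)) (g : G) (a : D) (e : G) :
    (y ⋆[σ] DFinsupp.single ⟨g, g, 𝟙 g⟩ a - DFinsupp.single ⟨g, g, 𝟙 g⟩ a ⋆[σ] y).support ⊆
      y.support.erase ⟨e, e, 𝟙 e⟩ := by
  intro r hr
  rw [DFinsupp.mem_support_iff, DFinsupp.sub_apply, catMul_single_id_apply,
    single_id_catMul_apply σ hσ1] at hr
  refine Finset.mem_erase.mpr ⟨?_, DFinsupp.mem_support_iff.mpr fun hr0 => hr (by simp [hr0])⟩
  rintro rfl
  apply hr
  split_ifs <;> simp [hσ1, mul_comm]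

lemma exists_ne_zero_supportedOnIdentities_of_isCrossedIdeal
    (hσ1 : ∀ e : G, σ e e (𝟙 e) = RingHom.id D)
    (hmax : ∀ x : CP (fun _ : G => D), CommutesWithCoeffs σ x → SupportedOnIdentities x)
    {I : Set (CP (fun _ : G => D))} (hI : IsCrossedIdeal σ (fun _ _ _ _ _ => 1) I)
    (hne : ∃ y ∈ I, y ≠ 0) : ∃ y ∈ I, y ≠ 0 ∧ SupportedOnIdentities y := by
  obtain ⟨-, hadd, hneg, hmul⟩ := hI
  obtain ⟨x, hxI, hx0, hmin⟩ := DFinsupp.exists_ne_zero_forall_card_support_lt hne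
  obtain ⟨⟨f, e, s⟩, hs⟩ : x.support.Nonempty :=
    Finset.nonempty_iff_ne_empty.mpr (DFinsupp.support_eq_empty.not.mpr hx0)
  set y := x ⋆[σ] DFinsupp.single ⟨e, f, inv s⟩ 1
  have hyI : y ∈ I := (hmul x _ hxI).2
  have hy1 : (⟨e, e, 𝟙 e⟩ : CMor G) ∈ y.support := by
    simpa [y, catMul_single_apply] using hs
  have hycomm : CommutesWithCoeffs σ y := fun g a => by
    refine sub_eq_zero.mp (hmin _ ?_ ?_)
    · rw [sub_eq_add_neg]
      exact hadd _ _ (hmul y _ hyI).2 (hneg _ (hmul y _ hyI).1)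
    · calc _ ≤ (y.support.erase ⟨e, e, 𝟙 e⟩).card :=
            Finset.card_le_card (support_commutator_subset σ hσ1 y g a e)
        _ < y.support.card := Finset.card_erase_lt_of_mem hy1
        _ ≤ x.support.card :=
            card_support_catMul_single_le (A := fun _ => D) σ _ x ⟨e, f, inv s⟩ 1
  refine ⟨y, hyI, fun hy0 => ?_, hmax y hycomm⟩
  simp [hy0] at hy1

lemma CommutesWithCoeffs.eq_of_apply_ne_zero (hσ1 : ∀ e : G, σ e e (𝟙 e) = RingHom.id D)
    {x : CP (fun _ : G => D)} (hx : CommutesWithCoeffs σ x) {e f : G} {s : e ⟶ f}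
    (hs : x ⟨e, f, s⟩ ≠ 0) : f = e := by
  have h := DFunLike.congr_fun (hx e 1) ⟨e, f, s⟩
  rw [catMul_single_id_apply, single_id_catMul_apply σ hσ1] at h
  by_contra hfe
  simp [hfe, hs] at h

lemma CommutesWithCoeffs.σ_eq_id_of_apply_ne_zero [IsDomain D]
    (hσ1 : ∀ e : G, σ e e (𝟙 e) = RingHom.id D)
    {x : CP (fun _ : G => D)} (hx : CommutesWithCoeffs σ x) {e : G} {s : e ⟶ e}
    (hs : x ⟨e, e, s⟩ ≠ 0) : σ e e s = RingHom.id D := by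
  ext a
  have h := DFunLike.congr_fun (hx e a) ⟨e, e, s⟩
  rw [catMul_single_id_apply, single_id_catMul_apply σ hσ1, if_pos rfl, if_pos rfl] at h
  exact mul_left_cancel₀ hs (h.trans (mul_comm _ _))

noncomputable def pushforwardEnd : CP (fun _ : G => D) →+ CP (fun _ : RingEndCat G D => D) :=
  DFinsupp.sumAddHom fun p => DFinsupp.singleAddHom (fun _ : CMor (RingEndCat G D) => D)
    ⟨⟨p.1⟩, ⟨p.2.1⟩, σ p.1 p.2.1 p.2.2⟩

lemma pushforwardEnd_single {e f : G} (s : e ⟶ f) (a : D) :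
    pushforwardEnd σ (DFinsupp.single ⟨e, f, s⟩ a) = DFinsupp.single ⟨⟨e⟩, ⟨f⟩, σ e f s⟩ a :=
  DFinsupp.sumAddHom_single _ _ _

lemma pushforwardEnd_single_mul
    (hσcomp : ∀ (e f g : G) (s : e ⟶ f) (t : f ⟶ g), σ e g (s ≫ t) = (σ f g t).comp (σ e f s))
    (p : CMor G) (a : D) (y : CP (fun _ : G => D)) :
    pushforwardEnd σ (DFinsupp.single p a ⋆[σ] y) =
      pushforwardEnd σ (DFinsupp.single p a) ⋆[fun _ _ τ => τ] pushforwardEnd σ y := by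
  induction y using DFinsupp.induction with
  | h0 => simp
  | ha q b y _ _ ih =>
    rw [catMul_add_right, map_add, map_add, catMul_add_right, ih]
    congr 1
    obtain ⟨p₁, p₂, s⟩ := p
    obtain ⟨q₁, q₂, t⟩ := q
    by_cases h : q₂ = p₁
    · subst h
      simp only [catMul_single_single_comp, pushforwardEnd_single, hσcomp]
      -- composition in `RingEndCat` is `RingHom.comp` in reverse order
      rfl
    · rw [catMul_single_single_of_ne σ _ _ _ _ h, map_zero, pushforwardEnd_single,
        pushforwardEnd_single, catMul_single_single_of_ne _ _ _ _ _ (mt RingEndCat.mk.inj h)]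

lemma pushforwardEnd_mul
    (hσcomp : ∀ (e f g : G) (s : e ⟶ f) (t : f ⟶ g), σ e g (s ≫ t) = (σ f g t).comp (σ e f s))
    (x y : CP (fun _ : G => D)) :
    pushforwardEnd σ (x ⋆[σ] y) = pushforwardEnd σ x ⋆[fun _ _ τ => τ] pushforwardEnd σ y := by
  induction x using DFinsupp.induction with
  | h0 => simp
  | ha p a x _ _ ih =>
    rw [catMul_add_left, map_add, map_add, catMul_add_left, ih, pushforwardEnd_single_mul σ hσcomp]

lemma isCrossedIdeal_ker_pushforwardEnd
    (hσcomp : ∀ (e f g : G) (s : e ⟶ f) (t : f ⟶ g), σ e g (s ≫ t) = (σ f g t).comp (σ e f s)) :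
    IsCrossedIdeal σ (fun _ _ _ _ _ => 1) {z | pushforwardEnd σ z = 0} := by
  refine ⟨map_zero _, fun x y hx hy => ?_, fun x hx => ?_, fun x r hx => ⟨?_, ?_⟩⟩ <;>
    simp_all [pushforwardEnd_mul σ hσcomp]

lemma pushforwardEnd_apply_id (hσ1 : ∀ e : G, σ e e (𝟙 e) = RingHom.id D)
    {z : CP (fun _ : G => D)} (hz : SupportedOnIdentities z) (g : G) :
    pushforwardEnd σ z ⟨⟨g⟩, ⟨g⟩, 𝟙 _⟩ = z ⟨g, g, 𝟙 g⟩ := by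
  rw [pushforwardEnd, DFinsupp.sumAddHom_apply, DFinsupp.sum_apply, DFinsupp.sum]
  refine (Finset.sum_eq_single ⟨g, g, 𝟙 g⟩ (fun p hp hpg => ?_) (fun hg => ?_)).trans ?_
  · obtain ⟨h, rfl⟩ : ∃ h, p = ⟨h, h, 𝟙 h⟩ :=
      not_forall_not.mp fun hid => DFinsupp.mem_support_iff.mp hp (hz p hid)
    refine DFinsupp.single_eq_of_ne fun hgh => hpg ?_
    obtain ⟨⟩ := congrArg (fun c => c.1.obj) hgh
    rfl
  · simp [DFinsupp.notMem_support_iff.mp hg]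
  · dsimp only
    rw [hσ1]
    exact DFinsupp.single_eq_same

lemma exists_isCrossedIdeal_forall_supportedOnIdentities_eq_zero [Nontrivial D]
    (hσ1 : ∀ e : G, σ e e (𝟙 e) = RingHom.id D)
    (hσcomp : ∀ (e f g : G) (s : e ⟶ f) (t : f ⟶ g), σ e g (s ≫ t) = (σ f g t).comp (σ e f s))
    {e : G} {s : e ⟶ e} (hs : s ≠ 𝟙 e) (hσs : σ e e s = RingHom.id D) :
    ∃ I, IsCrossedIdeal σ (fun _ _ _ _ _ => 1) I ∧ (∃ y ∈ I, y ≠ 0) ∧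
      ∀ y ∈ I, SupportedOnIdentities y → y = 0 := by
  refine ⟨_, isCrossedIdeal_ker_pushforwardEnd σ hσcomp,
    ⟨DFinsupp.single ⟨e, e, 𝟙 e⟩ 1 - DFinsupp.single ⟨e, e, s⟩ 1, ?_, fun h => ?_⟩,
    fun y hy hyA => DFinsupp.ext fun p => ?_⟩
  · simp [pushforwardEnd_single, hσ1, hσs]
  · have h1 := DFunLike.congr_fun h ⟨e, e, 𝟙 e⟩
    have hne : (⟨e, e, 𝟙 e⟩ : CMor G) ≠ ⟨e, e, s⟩ := by simpa [eq_comm] using hs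
    simp [DFinsupp.single_eq_of_ne hne] at h1
  · by_cases hp : ∃ g, p = ⟨g, g, 𝟙 g⟩
    · obtain ⟨g, rfl⟩ := hp
      rw [← pushforwardEnd_apply_id σ hσ1 hyA, (hy : pushforwardEnd σ y = 0)]
      rfl
    · exact hyA p (not_exists.mp hp)

lemma supportedOnIdentities_of_commutesWithCoeffs [IsDomain D]
    (hσ1 : ∀ e : G, σ e e (𝟙 e) = RingHom.id D)
    (hσcomp : ∀ (e f g : G) (s : e ⟶ f) (t : f ⟶ g), σ e g (s ≫ t) = (σ f g t).comp (σ e f s))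
    (hideal : ∀ I, IsCrossedIdeal σ (fun _ _ _ _ _ => 1) I → (∃ y ∈ I, y ≠ 0) →
      ∃ y ∈ I, y ≠ 0 ∧ SupportedOnIdentities y)
    {x : CP (fun _ : G => D)} (hx : CommutesWithCoeffs σ x) : SupportedOnIdentities x := by
  rintro ⟨e, f, s⟩ hs
  by_contra hxs
  obtain rfl := hx.eq_of_apply_ne_zero σ hσ1 hxs
  obtain ⟨I, hI, hne, hA⟩ := exists_isCrossedIdeal_forall_supportedOnIdentities_eq_zero σ hσ1 hσcomp
    (fun h => hs f (by rw [h])) (hx.σ_eq_id_of_apply_ne_zero σ hσ1 hxs)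
  obtain ⟨y, hyI, hy0, hyA⟩ := hideal I hI hne
  exact hy0 (hA y hyI hyA)

end SkewGroupoidRing

theorem skew_groupoid_ring_maximal_commutative_iff_ideals_intersect_general
    {G : Type*} [Groupoid G] {D : Type*} [CommRing D] [IsDomain D]
    (σ : ∀ e f : G, (e ⟶ f) → (D →+* D))
    (hσ1 : ∀ e : G, σ e e (𝟙 e) = RingHom.id D)
    (hσcomp : ∀ (e f g : G) (s : e ⟶ f) (t : f ⟶ g),
      σ e g (s ≫ t) = (σ f g t).comp (σ e f s)) :
    (∀ x : CP (fun _ : G => D),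
      (∀ (e : G) (a : D),
        catMul (A := fun _ : G => D) σ (fun _ _ _ _ _ => 1) x
            (catSingle (A := fun _ : G => D) ⟨e, e, 𝟙 e⟩ a)
          = catMul (A := fun _ : G => D) σ (fun _ _ _ _ _ => 1)
            (catSingle (A := fun _ : G => D) ⟨e, e, 𝟙 e⟩ a) x) →
      ∀ p : CMor G, (∀ e : G, p ≠ ⟨e, e, 𝟙 e⟩) → x p = 0) ↔
    (∀ I : Set (CP (fun _ : G => D)),
      IsCrossedIdeal (A := fun _ : G => D) σ (fun _ _ _ _ _ => 1) I →
      (∃ y ∈ I, y ≠ 0) →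
      ∃ y ∈ I, y ≠ 0 ∧ ∀ p : CMor G, (∀ e : G, p ≠ ⟨e, e, 𝟙 e⟩) → y p = 0) :=
  ⟨fun hmax _ hI hne => exists_ne_zero_supportedOnIdentities_of_isCrossedIdeal σ hσ1 hmax hI hne,
    fun hideal _ hx => supportedOnIdentities_of_commutesWithCoeffs σ hσ1 hσcomp hideal hx⟩

/-- for a skew groupoid ring `A ⋊^σ G` over a groupoid with
finitely many objects, all coefficient rings equal to a fixed integral domain
`D` and abelian isotropy groups, `A` is maximal commutative in `A ⋊^σ G` iff
every nonzero twosided ideal of `A ⋊^σ G` meets `A` nontrivially. -/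
theorem skew_groupoid_ring_maximal_commutative_iff_ideals_intersect
    {G : Type*} [Groupoid G] [Finite G] {D : Type*} [CommRing D] [IsDomain D]
    (σ : ∀ e f : G, (e ⟶ f) → (D →+* D))
    (hσ1 : ∀ e : G, σ e e (𝟙 e) = RingHom.id D)
    (hσcomp : ∀ (e f g : G) (s : e ⟶ f) (t : f ⟶ g),
      σ e g (s ≫ t) = (σ f g t).comp (σ e f s))
    (habel : ∀ (e : G) (s t : e ⟶ e), s ≫ t = t ≫ s) :
    (∀ x : CP (fun _ : G => D),
      (∀ (e : G) (a : D),
        catMul (A := fun _ : G => D) σ (fun _ _ _ _ _ => 1) x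
            (catSingle (A := fun _ : G => D) ⟨e, e, 𝟙 e⟩ a)
          = catMul (A := fun _ : G => D) σ (fun _ _ _ _ _ => 1)
            (catSingle (A := fun _ : G => D) ⟨e, e, 𝟙 e⟩ a) x) →
      ∀ p : CMor G, (∀ e : G, p ≠ ⟨e, e, 𝟙 e⟩) → x p = 0) ↔
    (∀ I : Set (CP (fun _ : G => D)),
      IsCrossedIdeal (A := fun _ : G => D) σ (fun _ _ _ _ _ => 1) I →
      (∃ y ∈ I, y ≠ 0) →
      ∃ y ∈ I, y ≠ 0 ∧ ∀ p : CMor G, (∀ e : G, p ≠ ⟨e, e, 𝟙 e⟩) → y p = 0) :=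
  skew_groupoid_ring_maximal_commutative_iff_ideals_intersect_general σ hσ1 hσcomp
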